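/- arXiv:1405.4347 — 2 statements merged into one kernel-verified Lean document; each statement's English description precedes it below -/
import Mathlib

section
/- Dual feasibility of martingale-difference penalties: Given any sequence of measurable functions h₁,...,h_T from the state space to the reals, the penalty defined by zₜ(v,w) = E[h_{t+1}(s(xₜ,vₜ,w_{t+1})) | Fₜ] − E[h_{t+1}(s(xₜ,vₜ,w_{t+1})) | Gₜ] satisfies E[Σₜ zₜ(ν)] = 0 ≤ 0 for every F-adapted policy ν; hence it is dual feasible. -/
open MeasureTheory Finset

/-- Dual feasibility of martingale-difference penalties: given measurable generating
functions `h₁,…,h_T` on the state space, the penalty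
`zₜ(ν) = E[h_{t+1}(s(xₜ,vₜ,w_{t+1})) | Fₜ] − E[h_{t+1}(s(xₜ,vₜ,w_{t+1})) | Gₜ]`
satisfies `E[Σₜ zₜ(ν)] = 0 ≤ 0` for every `𝔽`-adapted policy `ν`; hence it is dual
feasible. Here `𝔾` is a relaxation of the natural filtration `𝔽` (i.e. `Fₜ ≤ Gₜ`). -/
theorem martingale_difference_penalty_dual_feasible
    {Ω : Type*} {m0 : MeasurableSpace Ω} (μ : Measure Ω) [IsProbabilityMeasure μ]
    {Policy X V : Type*} [MeasurableSpace V] (T : ℕ)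
    (F G : ℕ → MeasurableSpace Ω)
    (hF : ∀ t, F t ≤ m0) (hG : ∀ t, G t ≤ m0) (hFG : ∀ t, F t ≤ G t)
    (s : X → V → ℝ → X)          -- state transition function
    (w : ℕ → Ω → ℝ)              -- IID noise driving the transitions
    (state : Policy → ℕ → Ω → X) -- state trajectory induced by a policy
    (act : Policy → ℕ → Ω → V)   -- actions chosen by a policy
    (h : ℕ → X → ℝ)              -- generating functions
    (z : ℕ → Policy → Ω → ℝ)
    (hz : ∀ (t : ℕ) (ν : Policy), z t ν = fun ω =>
      (μ[(fun ω' => h (t+1) (s (state ν t ω') (act ν t ω') (w (t+1) ω'))) | F t]) ω -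
      (μ[(fun ω' => h (t+1) (s (state ν t ω') (act ν t ω') (w (t+1) ω'))) | G t]) ω)
    (hint : ∀ (t : ℕ) (ν : Policy),
      Integrable (fun ω => h (t+1) (s (state ν t ω) (act ν t ω) (w (t+1) ω))) μ)
    (ν : Policy)
    (hadapted : ∀ t, Measurable[F t] (act ν t))  -- ν is 𝔽-adapted
    :
    (∫ ω, (∑ t ∈ range T, z t ν ω) ∂μ) = 0 ∧
    (∫ ω, (∑ t ∈ range T, z t ν ω) ∂μ) ≤ 0 := by
  have key : (∫ ω, (∑ t ∈ range T, z t ν ω) ∂μ) = 0 := by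
    have hzint : ∀ t ∈ range T, Integrable (z t ν) μ := by
      intro t _
      rw [hz]
      exact integrable_condExp.sub integrable_condExp
    rw [integral_finset_sum _ hzint]
    apply Finset.sum_eq_zero
    intro t _
    rw [hz]
    rw [integral_sub integrable_condExp integrable_condExp]
    rw [integral_condExp (hF t), integral_condExp (hG t)]
    ring
  exact ⟨key, key.le⟩
end

section
/- Minimax theorem for finite matrix games: For any real m×n matrix R, max over probability vectors y ∈ Δ_m of min over probability vectors z ∈ Δ_n of yᵀRz equals min over z ∈ Δ_n of max over y ∈ Δ_m of yᵀRz. -/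
/-! The inequality `sup inf ≤ inf sup` holds for any payoff. For the converse fix a level `c`:
either some column strategy `z` keeps every row payoff `(R z)ᵢ` at most `c`, or the compact convex
set `R Δ_n` misses the closed orthant `{x | x ≤ c}`. In the second case a hyperplane strictly
separating the two has a nonnegative normal vector, which, normalised, is a row strategy `y`
with `yᵀ R z > c` for every `z`. A level `c` strictly between the two sides of `sup inf < inf sup`
is then contradicted either way. -/

/-- Expected payoff `yᵀ R z` of the matrix game `R` under mixed strategies `y` and `z`. -/
def matrixPayoff {m n : ℕ} (R : Matrix (Fin m) (Fin n) ℝ) (y : Fin m → ℝ) (z : Fin n → ℝ) : ℝ :=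
  ∑ u, ∑ v, y u * R u v * z v

open Set Matrix

theorem ciSup_ciInf_eq_ciInf_ciSup_of_forall_or {ι κ α : Type*}
    [ConditionallyCompleteLinearOrder α] [DenselyOrdered α] [Nonempty ι] [Nonempty κ]
    {f : ι → κ → α} (hbelow : ∀ i, BddBelow (range (f i)))
    (habove : ∀ j, BddAbove (range fun i => f i j))
    (h : ∀ c, (∃ j, ∀ i, f i j ≤ c) ∨ ∃ i, ∀ j, c ≤ f i j) :
    ⨆ i, ⨅ j, f i j = ⨅ j, ⨆ i, f i j := by
  have hle : ∀ i j, ⨅ j, f i j ≤ ⨆ i, f i j := fun i j =>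
    (ciInf_le (hbelow i) j).trans (le_ciSup (habove j) i)
  have hbdd_inf : BddAbove (range fun i => ⨅ j, f i j) :=
    ⟨⨆ i, f i (Classical.arbitrary κ), forall_mem_range.2 fun i => hle i _⟩
  have hbdd_sup : BddBelow (range fun j => ⨆ i, f i j) :=
    ⟨⨅ j, f (Classical.arbitrary ι) j, forall_mem_range.2 fun j => hle _ j⟩
  refine (ciSup_le fun i => le_ciInf fun j => hle i j).antisymm (not_lt.1 fun hlt => ?_)
  obtain ⟨c, hlt_c, hc_lt⟩ := exists_between hlt
  rcases h c with ⟨j, hj⟩ | ⟨i, hi⟩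
  · exact ((ciInf_le hbdd_sup j).trans (ciSup_le hj)).not_gt hc_lt
  · exact ((le_ciInf hi).trans (le_ciSup hbdd_inf i)).not_gt hlt_c

theorem LinearMap.apply_nonneg_of_bddAbove_image_Iic {E : Type*} [AddCommGroup E]
    [PartialOrder E] [IsOrderedAddMonoid E] [Module ℝ E] [PosSMulMono ℝ E] (f : E →ₗ[ℝ] ℝ)
    {x₀ : E} (hf : BddAbove (f '' Iic x₀)) {d : E} (hd : 0 ≤ d) : 0 ≤ f d := by
  obtain ⟨u, hu⟩ := hf
  by_contra! hfd
  have hx₀ : f x₀ ≤ u := hu (mem_image_of_mem f self_mem_Iic)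
  have ht : 0 ≤ (f x₀ - u - 1) / f d := div_nonneg_of_nonpos (by linarith) hfd.le
  have := hu (mem_image_of_mem f (sub_le_self x₀ (smul_nonneg ht hd)))
  rw [map_sub, map_smul, smul_eq_mul, div_mul_cancel₀ _ hfd.ne] at this
  linarith

theorem LinearMap.apply_eq_dotProduct {ι R : Type*} [Fintype ι] [DecidableEq ι] [CommSemiring R]
    (f : (ι → R) →ₗ[R] R) (x : ι → R) : f x = (fun i => f (Pi.single i 1)) ⬝ᵥ x := by
  conv_lhs => rw [pi_eq_sum_univ' x]
  simp [dotProduct, mul_comm]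

theorem dotProduct_le_of_mem_stdSimplex {ι : Type*} [Fintype ι] {y x : ι → ℝ}
    (hy : y ∈ stdSimplex ℝ ι) {c : ℝ} (hx : x ≤ Function.const ι c) : y ⬝ᵥ x ≤ c := by
  calc y ⬝ᵥ x ≤ y ⬝ᵥ Function.const ι c := dotProduct_le_dotProduct_of_nonneg_left hx hy.1
    _ = c := by simp [dotProduct, ← Finset.sum_mul, hy.2]

theorem inv_sum_smul_mem_stdSimplex {ι : Type*} [Fintype ι] {w : ι → ℝ} (hw : 0 ≤ w)
    (hsum : 0 < ∑ i, w i) : (∑ i, w i)⁻¹ • w ∈ stdSimplex ℝ ι :=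
  ⟨fun i => smul_nonneg (inv_nonneg.2 hsum.le) (hw i), by simp [← Finset.mul_sum, hsum.ne']⟩

theorem exists_forall_dotProduct_mulVec_le_or_exists_forall_lt {ι κ : Type*} [Fintype ι]
    [Fintype κ] [Nonempty κ] (R : Matrix ι κ ℝ) (c : ℝ) :
    (∃ z ∈ stdSimplex ℝ κ, ∀ y ∈ stdSimplex ℝ ι, y ⬝ᵥ R *ᵥ z ≤ c) ∨
      ∃ y ∈ stdSimplex ℝ ι, ∀ z ∈ stdSimplex ℝ κ, c < y ⬝ᵥ R *ᵥ z := by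
  classical
  by_cases hmeet : ∃ z ∈ stdSimplex ℝ κ, R *ᵥ z ≤ Function.const ι c
  · obtain ⟨z, hz, hle⟩ := hmeet
    exact .inl ⟨z, hz, fun y hy => dotProduct_le_of_mem_stdSimplex hy hle⟩
  push Not at hmeet
  have hdisj : Disjoint (Iic (Function.const ι c)) (R.mulVecLin '' stdSimplex ℝ κ) := by
    rw [Set.disjoint_right]
    rintro _ ⟨z, hz, rfl⟩
    exact hmeet z hz
  obtain ⟨f, u, v, hfu, huv, hvf⟩ := geometric_hahn_banach_closed_compact (convex_Iic _)
    isClosed_Iic ((convex_stdSimplex ℝ κ).linear_image _)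
    ((isCompact_stdSimplex ℝ κ).image R.mulVecLin.continuous_of_finiteDimensional) hdisj
  set w : ι → ℝ := fun i => f (Pi.single i 1)
  have hf : ∀ x, f x = w ⬝ᵥ x := (f : (ι → ℝ) →ₗ[ℝ] ℝ).apply_eq_dotProduct
  have hw : 0 ≤ w := fun i => (f : (ι → ℝ) →ₗ[ℝ] ℝ).apply_nonneg_of_bddAbove_image_Iic
    ⟨u, forall_mem_image.2 fun x hx => (hfu x hx).le⟩ (Pi.single_nonneg.2 zero_le_one)
  have hfc : f (Function.const ι c) = c * ∑ i, w i := by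
    simp [hf, dotProduct, Finset.mul_sum, mul_comm]
  have hlt : ∀ z ∈ stdSimplex ℝ κ, c * ∑ i, w i < w ⬝ᵥ R *ᵥ z := fun z hz => by
    rw [← hfc, ← hf]
    exact (hfu _ self_mem_Iic).trans (huv.trans (hvf _ (mem_image_of_mem _ hz)))
  have hsum : 0 < ∑ i, w i := by
    refine (Finset.sum_nonneg fun i _ => hw i).lt_of_ne fun h => ?_
    have := hlt _ (single_mem_stdSimplex ℝ (Classical.arbitrary κ))
    rw [← h, (Fintype.sum_eq_zero_iff_of_nonneg hw).1 h.symm] at this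
    simp at this
  refine .inr ⟨_, inv_sum_smul_mem_stdSimplex hw hsum, fun z hz => ?_⟩
  rw [smul_dotProduct, smul_eq_mul, lt_inv_mul_iff₀ hsum, mul_comm]
  exact hlt z hz

theorem matrixPayoff_eq_dotProduct_mulVec {m n : ℕ} (R : Matrix (Fin m) (Fin n) ℝ)
    (y : Fin m → ℝ) (z : Fin n → ℝ) : matrixPayoff R y z = y ⬝ᵥ R *ᵥ z := by
  simp [matrixPayoff, dotProduct, mulVec, Finset.mul_sum, mul_assoc]

/-- Minimax theorem for finite matrix games: for any real `m × n` matrix `R`,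
`max_{y ∈ Δ_m} min_{z ∈ Δ_n} yᵀRz = min_{z ∈ Δ_n} max_{y ∈ Δ_m} yᵀRz`. -/
theorem matrix_minimax {m n : ℕ} (hm : 0 < m) (hn : 0 < n)
    (R : Matrix (Fin m) (Fin n) ℝ) :
    (⨆ y : stdSimplex ℝ (Fin m), ⨅ z : stdSimplex ℝ (Fin n), matrixPayoff R y z) =
      ⨅ z : stdSimplex ℝ (Fin n), ⨆ y : stdSimplex ℝ (Fin m), matrixPayoff R y z := by
  have : Nonempty (Fin m) := Fin.pos_iff_nonempty.1 hm
  have : Nonempty (Fin n) := Fin.pos_iff_nonempty.1 hn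
  simp only [matrixPayoff_eq_dotProduct_mulVec]
  refine ciSup_ciInf_eq_ciInf_ciSup_of_forall_or (fun y => ?_) (fun z => ?_) fun c => ?_
  · exact (isCompact_range (by fun_prop)).bddBelow
  · exact (isCompact_range (by fun_prop)).bddAbove
  · rcases exists_forall_dotProduct_mulVec_le_or_exists_forall_lt R c with
      ⟨z, hz, h⟩ | ⟨y, hy, h⟩
    exacts [.inl ⟨⟨z, hz⟩, fun y => h y y.2⟩, .inr ⟨⟨y, hy⟩, fun z => (h z z.2).le⟩]
end
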